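/- Let L : ℝ → ℝ^{n×n} be a continuous matrix-valued function. Suppose U : ℝ → ℝ^{n×r} is a differentiable solution of the OTD equation dU/dt = L(t)U − U L_r(t), where L_r(t) = U(t)ᵀ L(t) U(t), and T : ℝ → ℝ^{r×r} is the differentiable solution of dT/dt = L_r(t) T with T(0) = T_0. Let V : ℝ → ℝ^{n×r} be any differentiable solution of the time-dependent linearized dynamics dV/dt = L(t)V with V(0) = U(0) T_0. Then V(t) = U(t) T(t) for all t. -/

import Mathlib

open Matrix Set

attribute [local instance] Matrix.normedAddCommGroup Matrix.normedSpace

/-!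
Both `V` and `U T` solve the linear equation `X' = L(t) X` with the same value at `t = 0`:
differentiating `U T`, the terms `± U L_r T` cancel. A linear vector field with continuous
coefficients is Lipschitz on every compact time interval, so the solution is unique.
-/

theorem ODE_solution_unique_of_continuous_linear {E : Type*} [NormedAddCommGroup E]
    [NormedSpace ℝ E] {A : ℝ → E →L[ℝ] E} (hA : Continuous A) {f g : ℝ → E} {t₀ : ℝ}
    (hf : ∀ t, HasDerivAt f (A t (f t)) t) (hg : ∀ t, HasDerivAt g (A t (g t)) t)
    (heq : f t₀ = g t₀) : f = g := by
  ext t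
  obtain ⟨a, b, ht, ht₀⟩ : ∃ a b, t ∈ Ioo a b ∧ t₀ ∈ Ioo a b :=
    ⟨min t t₀ - 1, max t t₀ + 1, by grind, by grind⟩
  obtain ⟨K, hK⟩ := (isCompact_Icc (a := a) (b := b)).bddAbove_image
    (continuous_nnnorm.comp hA).continuousOn
  have hlip : ∀ s ∈ Ioo a b, LipschitzOnWith K (A s) univ := fun s hs =>
    ((A s).lipschitz.weaken (hK ⟨s, Ioo_subset_Icc_self hs, rfl⟩)).lipschitzOnWith
  exact ODE_solution_unique_of_mem_Ioo hlip ht₀ (fun s _ => ⟨hf s, mem_univ _⟩)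
    (fun s _ => ⟨hg s, mem_univ _⟩) heq ht

theorem HasDerivAt.matrix_mul {l m n : Type*} [Fintype l] [Fintype m] [Fintype n]
    {A : ℝ → Matrix l m ℝ} {B : ℝ → Matrix m n ℝ} {A' : Matrix l m ℝ} {B' : Matrix m n ℝ}
    {t : ℝ} (hA : HasDerivAt A A' t) (hB : HasDerivAt B B' t) :
    HasDerivAt (fun τ => A τ * B τ) (A t * B' + A' * B t) t :=
  ((mulLinearMap ℝ (A := ℝ)).toContinuousBilinearMap.hasDerivAt_of_bilinear
    (fun _ => hA) (fun _ => hB) :)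

/-- Theorem 4 of the paper: if U solves the OTD equation dU/dt = L(t)U − U L_r(t)
with L_r(t) = U(t)ᵀ L(t) U(t), T solves dT/dt = L_r(t) T with T(0) = T₀, and V solves
the linearized dynamics dV/dt = L(t)V with V(0) = U(0) T₀, then V(t) = U(t) T(t)
for all t. -/
theorem stmt13 {n r : ℕ} (L : ℝ → Matrix (Fin n) (Fin n) ℝ) (hL : Continuous L)
    (U : ℝ → Matrix (Fin n) (Fin r) ℝ)
    (hU : ∀ t, HasDerivAt U (L t * U t - U t * ((U t)ᵀ * L t * U t)) t)
    (T : ℝ → Matrix (Fin r) (Fin r) ℝ) (T0 : Matrix (Fin r) (Fin r) ℝ)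
    (hT : ∀ t, HasDerivAt T ((U t)ᵀ * L t * U t * T t) t) (hT0 : T 0 = T0)
    (V : ℝ → Matrix (Fin n) (Fin r) ℝ)
    (hV : ∀ t, HasDerivAt V (L t * V t) t) (hV0 : V 0 = U 0 * T0) :
    ∀ t, V t = U t * T t := by
  have hUT : ∀ t, HasDerivAt (fun τ => U τ * T τ) (L t * (U t * T t)) t := fun t => by
    convert (hU t).matrix_mul (hT t) using 1
    simp only [Matrix.sub_mul, Matrix.mul_assoc]
    abel
  have hVeq : V = fun τ => U τ * T τ :=
    ODE_solution_unique_of_continuous_linear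
      ((mulLinearMap ℝ (A := ℝ)).toContinuousBilinearMap.continuous.comp hL) hV hUT
      (t₀ := 0) (by rw [hV0, hT0])
  exact fun t => congrFun hVeq t
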